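/- arXiv:1210.4352 — 7 statements merged into one kernel-verified Lean document; each statement's English description precedes it below -/
import Mathlib

section
/- Let G=(V,E) be a finite simple graph and let the six distinct vertices v_1,…,v_6 build an AP_6 in G (that is, v_1v_2, v_3v_4, v_5v_6 ∉ E and v_2v_3, v_4v_5, v_6v_1 ∈ E). Assume that among the three edges v_2v_3, v_4v_5, v_6v_1 of this AP_6, no pair of edges is in conflict. Then the edges v_3v_6, v_4v_1, v_5v_2 exist in G, and moreover v_4v_5 || v_3v_6, v_2v_3 || v_4v_1, and v_6v_1 || v_5v_2. -/
open SimpleGraph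

/-- Two edges `e`, `f` of a simple graph `G` are *in conflict* (written `e ‖ f` in the paper):
their endpoints can be written `e = v₁v₂`, `f = v₃v₄` with `v₁v₄ ∉ E` and `v₂v₃ ∉ E`,
so that the four (distinct) vertices build an alternating cycle `AC₄`
(one of `2K₂`, `P₄`, `C₄`). -/
def Sym2Conflict {V : Type*} (G : SimpleGraph V) (e f : Sym2 V) : Prop :=
  ∃ a b c d : V, e = s(a, b) ∧ f = s(c, d) ∧
    G.Adj a b ∧ G.Adj c d ∧ ¬ G.Adj a d ∧ ¬ G.Adj b c ∧
    a ≠ c ∧ a ≠ d ∧ b ≠ c ∧ b ≠ d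

/-- The conflict graph `G*` of `G` (whose vertices are the edges of `G`, two of them adjacent
iff the corresponding edges are in conflict) is bipartite, i.e. `χ(G*) ≤ 2`:
there is a `2`-coloring of the edges of `G` such that conflicting edges get different colors. -/
def ConflictGraphBipartite {V : Type*} (G : SimpleGraph V) : Prop :=
  ∃ χ : Sym2 V → Bool, ∀ e f, Sym2Conflict G e f → χ e ≠ χ f

/-- `χ` is a proper 2-coloring of the vertices of the conflict graph `G*`. -/
def ProperConflictColoring {V : Type*} (G : SimpleGraph V) (χ : Sym2 V → Bool) : Prop :=
  ∀ e f, Sym2Conflict G e f → χ e ≠ χ f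

/-- `e` and `f` lie in the same connected component of the conflict graph `G*`. -/
def SameComp {V : Type*} (G : SimpleGraph V) (e f : Sym2 V) : Prop :=
  Relation.ReflTransGen (Sym2Conflict G) e f

/-- The literals of `e` and `f` (w.r.t. the proper 2-coloring `χ` of the conflict graph)
are equal: same connected component of `G*` and same color. -/
def SameLit {V : Type*} (G : SimpleGraph V) (χ : Sym2 V → Bool) (e f : Sym2 V) : Prop :=
  SameComp G e f ∧ χ e = χ f

/-- The literal of `e` is the negation of the literal of `f`: same connected component of the
conflict graph `G*`, different colors. -/
def OppLit {V : Type*} (G : SimpleGraph V) (χ : Sym2 V → Bool) (e f : Sym2 V) : Prop :=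
  SameComp G e f ∧ χ e ≠ χ f

/-- Six (not necessarily distinct) vertices `v₁,…,v₆` build an alternating cycle `AC₆` in `G`:
`v₁v₂, v₃v₄, v₅v₆ ∉ E` and `v₂v₃, v₄v₅, v₆v₁ ∈ E`. -/
def IsAC6 {V : Type*} (G : SimpleGraph V) (v1 v2 v3 v4 v5 v6 : V) : Prop :=
  ¬ G.Adj v1 v2 ∧ ¬ G.Adj v3 v4 ∧ ¬ G.Adj v5 v6 ∧
    G.Adj v2 v3 ∧ G.Adj v4 v5 ∧ G.Adj v6 v1

/-- `G` has an alternating cycle `AC_{2k}` in the edge subset `F`: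
`2k` (not necessarily distinct) vertices `w 0, …, w (2k-1)` with
`w i — w (i+1)` an edge of `F` for odd `i` and a non-edge of `G` for even `i`
(indices mod `2k`). -/
def HasAltCycle {V : Type*} (G : SimpleGraph V) (F : Set (Sym2 V)) (k : ℕ) : Prop :=
  ∃ w : ℕ → V, ∀ i < 2 * k,
    (Odd i → s(w i, w ((i + 1) % (2 * k))) ∈ F) ∧
    (Even i → ¬ G.Adj (w i) (w ((i + 1) % (2 * k))))

/-- `G` is a threshold graph: there are real weights `a` with `uv ∈ E ↔ a u + a v ≥ 1`
for all distinct `u`, `v`. -/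
def IsThresholdGraph {V : Type*} (G : SimpleGraph V) : Prop :=
  ∃ a : V → ℝ, ∀ u v : V, u ≠ v → (G.Adj u v ↔ 1 ≤ a u + a v)

/-- The edge set of `G` is the union of the edge sets of `k` threshold graphs on `V`. -/
def HasThresholdCover {V : Type*} (G : SimpleGraph V) (k : ℕ) : Prop :=
  ∃ f : Fin k → SimpleGraph V, (∀ i, IsThresholdGraph (f i)) ∧
    ∀ u v, G.Adj u v ↔ ∃ i, (f i).Adj u v

/-- The threshold cover number `t(G)`: the smallest (positive) `k` such that the edge set
of `G` is the union of the edge sets of `k` threshold graphs. -/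
noncomputable def thresholdCoverNumber {V : Type*} (G : SimpleGraph V) : ℕ :=
  sInf {k | 0 < k ∧ HasThresholdCover G k}

/-- A bipartite graph, given as a relation `E : α → β → Prop` between its two color classes,
is a *chain graph*: the neighborhoods of any two vertices in the same color class are
comparable under inclusion. -/
def IsChainRel {α β : Type*} (E : α → β → Prop) : Prop :=
  (∀ a a' : α, (∀ b, E a b → E a' b) ∨ (∀ b, E a' b → E a b)) ∧
  (∀ b b' : β, (∀ a, E a b → E a b') ∨ (∀ a, E a b' → E a b))

/-- The edge set of the bipartite graph `E` is the union of the edge sets of `k` chain graphs. -/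
def HasChainCover {α β : Type*} (E : α → β → Prop) (k : ℕ) : Prop :=
  ∃ f : Fin k → α → β → Prop, (∀ i, IsChainRel (f i)) ∧
    ∀ a b, E a b ↔ ∃ i, f i a b

/-- The chain cover number `ch(G)` of a bipartite graph. -/
noncomputable def chainCoverNumber {α β : Type*} (E : α → β → Prop) : ℕ :=
  sInf {k | 0 < k ∧ HasChainCover E k}

/-- `G` is a split graph: its vertex set can be partitioned into a clique and an
independent set. -/
def IsSplitGraph {V : Type*} (G : SimpleGraph V) : Prop :=
  ∃ K : Set V, (∀ u ∈ K, ∀ v ∈ K, u ≠ v → G.Adj u v) ∧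
    ∀ u ∉ K, ∀ v ∉ K, ¬ G.Adj u v

/-- `P` is an interval order: each element gets a real interval `[l x, r x]` such that
`P x y` iff the interval of `x` lies entirely to the left of the interval of `y`. -/
def IsIntervalOrder {U : Type*} (P : U → U → Prop) : Prop :=
  ∃ l r : U → ℝ, (∀ x, l x ≤ r x) ∧ ∀ x y, P x y ↔ r x < l y

/-- `P` is a (strict) partial order: irreflexive and transitive. -/
def IsPartialOrderRel {U : Type*} (P : U → U → Prop) : Prop :=
  (∀ x, ¬ P x x) ∧ ∀ x y z, P x y → P y z → P x z

/-- `P` is a linear order: a partial order in which any two distinct elements are comparable. -/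
def IsLinearOrderRel {U : Type*} (P : U → U → Prop) : Prop :=
  IsPartialOrderRel P ∧ ∀ x y : U, x ≠ y → P x y ∨ P y x

/-- A bipartite graph `E` on color classes `U = V = Fin n` (containing the perfect matching
`E₀ = {uᵢvᵢ}`) is *linear-interval coverable*: `E = E₁ ∪ E₂` for chain graphs `E₁`, `E₂`
with `E₀ ⊆ E₂ \ E₁`. -/
def LinearIntervalCoverable (n : ℕ) (E : Fin n → Fin n → Prop) : Prop :=
  ∃ E1 E2 : Fin n → Fin n → Prop,
    IsChainRel E1 ∧ IsChainRel E2 ∧ (∀ i j, E i j ↔ E1 i j ∨ E2 i j) ∧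
    ∀ i, E2 i i ∧ ¬ E1 i i

/-- The associated split graph `H_G` of a bipartite graph `G = (α, β, E)`:
the graph on `α ⊕ β` obtained from `G` by turning the color class `β` into a clique. -/
def assocSplitGraph {α β : Type*} (E : α → β → Prop) : SimpleGraph (α ⊕ β) where
  Adj x y := match x, y with
    | Sum.inl _, Sum.inl _ => False
    | Sum.inl a, Sum.inr b => E a b
    | Sum.inr b, Sum.inl a => E a b
    | Sum.inr b, Sum.inr b' => b ≠ b'
  symm := by
    constructor
    rintro (a | b) (a' | b') h
    · exact h
    · exact h
    · exact h
    · exact Ne.symm h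
  loopless := by
    constructor
    rintro (a | b) h
    · exact h
    · exact h rfl

/-- The split graph `H` of the Setting: the associated split graph of `G̃ = Ĉ(P)`,
the bipartite complement of the domination bipartite graph of `P`. -/
def paperH {n : ℕ} (P : Fin n → Fin n → Prop) : SimpleGraph (Fin n ⊕ Fin n) :=
  assocSplitGraph (fun i j : Fin n => ¬ P i j)

/-- The split graph `H − E₀` of the Setting: `H` with the perfect matching
`E₀ = {uᵢvᵢ}` deleted. -/
def paperHminusE0 {n : ℕ} (P : Fin n → Fin n → Prop) : SimpleGraph (Fin n ⊕ Fin n) :=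
  assocSplitGraph (fun i j : Fin n => ¬ P i j ∧ i ≠ j)

/-- `G` has an `AP₅`: an `AC₆` with `vᵢ = vᵢ₊₃` for some `i`, having exactly five
distinct vertices. -/
def HasAP5 {V : Type*} [DecidableEq V] (G : SimpleGraph V) : Prop :=
  ∃ v1 v2 v3 v4 v5 v6 : V,
    (v1 = v4 ∨ v2 = v5 ∨ v3 = v6) ∧
    ({v1, v2, v3, v4, v5, v6} : Finset V).card = 5 ∧
    IsAC6 G v1 v2 v3 v4 v5 v6

/-- `G` has a double `AP₆`: an `AP₆` (an `AC₆` on six distinct vertices) containing in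
addition the edges `v₁v₃, v₂v₆`, or `v₃v₅, v₄v₂`, or `v₅v₁, v₆v₄`. -/
def HasDoubleAP6 {V : Type*} (G : SimpleGraph V) : Prop :=
  ∃ v1 v2 v3 v4 v5 v6 : V,
    List.Pairwise (· ≠ ·) [v1, v2, v3, v4, v5, v6] ∧
    IsAC6 G v1 v2 v3 v4 v5 v6 ∧
    ((G.Adj v1 v3 ∧ G.Adj v2 v6) ∨ (G.Adj v3 v5 ∧ G.Adj v4 v2) ∨
      (G.Adj v5 v1 ∧ G.Adj v6 v4))

/-!
If `v₃v₆` were a non-edge, the edges `v₃v₂` and `v₁v₆` together with the non-edges `v₂v₁`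
and `v₆v₃` would form an `AC₄`, i.e. `v₂v₃ ‖ v₆v₁`. So `v₃v₆ ∈ E`, and then the edges `v₄v₅`,
`v₆v₃` and the non-edges `v₅v₆`, `v₃v₄` give `v₄v₅ ‖ v₃v₆`. An `AP₆` stays an `AP₆` when its
vertices are rotated by two places, which yields the other two diagonals in the same way.
-/

section Conflict

variable {V : Type*} {G : SimpleGraph V}

theorem sym2Conflict_mk {a b c d : V} (hab : G.Adj a b) (hcd : G.Adj c d)
    (had : ¬ G.Adj a d) (hbc : ¬ G.Adj b c) (had' : a ≠ d) (hbc' : b ≠ c) :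
    Sym2Conflict G s(a, b) s(c, d) := by
  refine ⟨a, b, c, d, rfl, rfl, hab, hcd, had, hbc, ?_, had', hbc', ?_⟩
  · rintro rfl
    exact hbc hab.symm
  · rintro rfl
    exact had hab

theorem Sym2Conflict.symm {e f : Sym2 V} : Sym2Conflict G e f → Sym2Conflict G f e := by
  rintro ⟨a, b, c, d, rfl, rfl, hab, hcd, had, hbc, hac, had', hbc', hbd⟩
  exact ⟨c, d, a, b, rfl, rfl, hcd, hab, fun h => hbc h.symm, fun h => had h.symm,
    hac.symm, hbc'.symm, had'.symm, hbd.symm⟩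

end Conflict

section AP6

variable {V : Type*} {G : SimpleGraph V} {v1 v2 v3 v4 v5 v6 : V}

def IsAP6 (G : SimpleGraph V) (v1 v2 v3 v4 v5 v6 : V) : Prop :=
  [v1, v2, v3, v4, v5, v6].Nodup ∧ IsAC6 G v1 v2 v3 v4 v5 v6

theorem IsAP6.rotate (h : IsAP6 G v1 v2 v3 v4 v5 v6) : IsAP6 G v3 v4 v5 v6 v1 v2 := by
  obtain ⟨hnd, h12, h34, h56, h23, h45, h61⟩ := h
  exact ⟨(List.nodup_rotate (n := 2)).mpr hnd, h34, h56, h12, h45, h61, h23⟩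

theorem IsAP6.adj_and_sym2Conflict (h : IsAP6 G v1 v2 v3 v4 v5 v6)
    (hc : ¬ Sym2Conflict G s(v2, v3) s(v6, v1)) :
    G.Adj v3 v6 ∧ Sym2Conflict G s(v4, v5) s(v3, v6) := by
  obtain ⟨hnd, h12, h34, h56, h23, h45, h61⟩ := h
  simp only [List.nodup_cons, List.mem_cons, List.not_mem_nil, not_or] at hnd
  obtain ⟨⟨n12, -, -, -, -, -⟩, ⟨-, -, -, -, -⟩, ⟨n34, -, n36, -⟩, ⟨-, -, -⟩, ⟨n56, -⟩, -⟩ := hnd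
  have e36 : G.Adj v3 v6 := by
    by_contra h36
    apply hc
    rw [Sym2.eq_swap, Sym2.eq_swap (a := v6)]
    exact sym2Conflict_mk h23.symm h61.symm h36 (fun h => h12 h.symm) n36 (Ne.symm n12)
  refine ⟨e36, ?_⟩
  rw [Sym2.eq_swap (a := v3)]
  exact sym2Conflict_mk h45 e36.symm (fun h => h34 h.symm) h56 (Ne.symm n34) n56

end AP6

theorem statement_0_general {V : Type*} (G : SimpleGraph V)
    (v1 v2 v3 v4 v5 v6 : V)
    (hdist : List.Pairwise (· ≠ ·) [v1, v2, v3, v4, v5, v6])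
    (h12 : ¬ G.Adj v1 v2) (h34 : ¬ G.Adj v3 v4) (h56 : ¬ G.Adj v5 v6)
    (h23 : G.Adj v2 v3) (h45 : G.Adj v4 v5) (h61 : G.Adj v6 v1)
    (hc1 : ¬ Sym2Conflict G s(v2, v3) s(v4, v5))
    (hc2 : ¬ Sym2Conflict G s(v2, v3) s(v6, v1))
    (hc3 : ¬ Sym2Conflict G s(v4, v5) s(v6, v1)) :
    G.Adj v3 v6 ∧ G.Adj v4 v1 ∧ G.Adj v5 v2 ∧
    Sym2Conflict G s(v4, v5) s(v3, v6) ∧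
    Sym2Conflict G s(v2, v3) s(v4, v1) ∧
    Sym2Conflict G s(v6, v1) s(v5, v2) := by
  have hP : IsAP6 G v1 v2 v3 v4 v5 v6 := ⟨hdist, h12, h34, h56, h23, h45, h61⟩
  obtain ⟨e36, c45_36⟩ := hP.adj_and_sym2Conflict hc2
  obtain ⟨e52, c61_52⟩ := hP.rotate.adj_and_sym2Conflict (mt Sym2Conflict.symm hc1)
  obtain ⟨e14, c23_14⟩ := hP.rotate.rotate.adj_and_sym2Conflict (mt Sym2Conflict.symm hc3)
  rw [Sym2.eq_swap (a := v1)] at c23_14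
  exact ⟨e36, e14.symm, e52, c45_36, c23_14, c61_52⟩

/-- Lemma: AP₆ with no pair of its edges in conflict. -/
theorem statement_0 {V : Type*} [Fintype V] (G : SimpleGraph V)
    (v1 v2 v3 v4 v5 v6 : V)
    (hdist : List.Pairwise (· ≠ ·) [v1, v2, v3, v4, v5, v6])
    (h12 : ¬ G.Adj v1 v2) (h34 : ¬ G.Adj v3 v4) (h56 : ¬ G.Adj v5 v6)
    (h23 : G.Adj v2 v3) (h45 : G.Adj v4 v5) (h61 : G.Adj v6 v1)
    (hc1 : ¬ Sym2Conflict G s(v2, v3) s(v4, v5))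
    (hc2 : ¬ Sym2Conflict G s(v2, v3) s(v6, v1))
    (hc3 : ¬ Sym2Conflict G s(v4, v5) s(v6, v1)) :
    G.Adj v3 v6 ∧ G.Adj v4 v1 ∧ G.Adj v5 v2 ∧
    Sym2Conflict G s(v4, v5) s(v3, v6) ∧
    Sym2Conflict G s(v2, v3) s(v4, v1) ∧
    Sym2Conflict G s(v6, v1) s(v5, v2) :=
  statement_0_general G v1 v2 v3 v4 v5 v6 hdist h12 h34 h56 h23 h45 h61 hc1 hc2 hc3
end

section
/- Let P be a partial order on the finite set U = {u_1,…,u_n}. Then P is a linear order if and only if the bipartite graph NC(P) is a chain graph. -/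
open SimpleGraph

/-! In `NC(P)` the neighbourhood of `uᵢ` is the closed up-set `{j | i = j ∨ i <_P j}` and that
of `vⱼ` the closed down-set of `j`. By transitivity, closed up-sets shrink and closed down-sets
grow along `<_P`, so a linear order gives nested neighbourhoods. Conversely, since `i` lies in
its own closed up-set, an inclusion between the up-sets of two distinct elements already
compares them. -/

section ReflClosure

variable {U : Type*} {P : U → U → Prop}

theorem closedUpperSet_antitone [IsTrans U P] {a a' : U} (h : P a a') (b : U) :
    a' = b ∨ P a' b → a = b ∨ P a b
  | .inl rfl => .inr h
  | .inr hb => .inr (trans_of P h hb)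

theorem closedLowerSet_monotone [IsTrans U P] {b b' : U} (h : P b b') (a : U) :
    a = b ∨ P a b → a = b' ∨ P a b'
  | .inl rfl => .inr h
  | .inr ha => .inr (trans_of P ha h)

theorem isChainRel_reflClosure_of_total [IsTrans U P]
    (htot : ∀ x y : U, x ≠ y → P x y ∨ P y x) : IsChainRel (fun i j : U => i = j ∨ P i j) := by
  constructor
  · intro a a'
    rcases eq_or_ne a a' with rfl | hne
    · exact .inl fun _ => id
    rcases htot a a' hne with h | h
    · exact .inr (closedUpperSet_antitone h)
    · exact .inl (closedUpperSet_antitone h)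
  · intro b b'
    rcases eq_or_ne b b' with rfl | hne
    · exact .inl fun _ => id
    rcases htot b b' hne with h | h
    · exact .inl (closedLowerSet_monotone h)
    · exact .inr (closedLowerSet_monotone h)

theorem total_of_isChainRel_reflClosure (hchain : IsChainRel (fun i j : U => i = j ∨ P i j))
    {x y : U} (hxy : x ≠ y) : P x y ∨ P y x := by
  rcases hchain.1 x y with h | h
  · exact .inr ((h x (.inl rfl)).resolve_left hxy.symm)
  · exact .inl ((h y (.inl rfl)).resolve_left hxy)

end ReflClosure

/-- Lemma: `P` is a linear order iff `NC(P)` is a chain graph. -/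
theorem statement_3 {n : ℕ} (P : Fin n → Fin n → Prop) (hP : IsPartialOrderRel P) :
    IsLinearOrderRel P ↔ IsChainRel (fun i j : Fin n => i = j ∨ P i j) := by
  have : IsTrans (Fin n) P := ⟨hP.2⟩
  exact ⟨fun hlin => isChainRel_reflClosure_of_total hlin.2,
    fun hchain => ⟨hP, fun _ _ => total_of_isChainRel_reflClosure hchain⟩⟩
end

section
/- Let Q_1 = (U,R_1) be an interval order and Q_2 = (U,R_2) be a partial order on the same finite set U, such that Q_1 and Q_2 do not contradict each other (there are no x, y ∈ U with x <_{Q_1} y and y <_{Q_2} x). Then there exists a linear order Q_0 on U that is a linear extension of both Q_1 and Q_2 (i.e., x <_{Q_1} y implies x <_{Q_0} y, and x <_{Q_2} y implies x <_{Q_0} y). -/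
open SimpleGraph

/-!
An interval order is `(2+2)`-free, so a chain `a <₁ b ≤₂ y <₁ z` collapses to `a <₁ z`:
otherwise `y <₁ b`, contradicting `b ≤₂ y`. Hence every path in `Q₁ ∪ Q₂` shortens to a
`Q₂`-step or to a single `Q₁`-step framed by (possibly trivial) `Q₂`-steps, and neither can
close up into a cycle. So the transitive closure of `Q₁ ∪ Q₂` is a strict partial order, and
Szpilrajn's theorem extends it to a linear order.
-/

open Relation

section

variable {U : Type*} {P Q : U → U → Prop}

theorem IsIntervalOrder.irrefl (hP : IsIntervalOrder P) (x : U) : ¬ P x x := by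
  obtain ⟨l, r, hlr, hiff⟩ := hP
  rw [hiff, not_lt]
  exact hlr x

theorem IsIntervalOrder.two_plus_two_free (hP : IsIntervalOrder P) {a b y z : U}
    (hab : P a b) (hyz : P y z) : P a z ∨ P y b := by
  obtain ⟨l, r, hlr, hiff⟩ := hP
  simp only [hiff] at *
  by_contra! h
  linarith [hlr b, hlr y]

theorem IsPartialOrderRel.reflGen_trans (hQ : IsPartialOrderRel Q) {x y z : U}
    (hxy : ReflGen Q x y) (hyz : ReflGen Q y z) : ReflGen Q x z := by
  rcases hxy with _ | hxy
  · exact hyz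
  rcases hyz with _ | hyz
  · exact .single hxy
  · exact .single (hQ.2 _ _ _ hxy hyz)

theorem IsIntervalOrder.not_rel_of_reflGen (hP : IsIntervalOrder P)
    (hPQ : ∀ x y : U, ¬ (P x y ∧ Q y x)) {a b : U} (hba : ReflGen Q b a) : ¬ P a b := by
  rcases hba with _ | hba
  · exact hP.irrefl _
  · exact fun hab => hPQ a b ⟨hab, hba⟩

def MixedStep (P Q : U → U → Prop) (x y : U) : Prop :=
  Q x y ∨ ∃ a b, ReflGen Q x a ∧ P a b ∧ ReflGen Q b y

theorem MixedStep.of_sup {x y : U} (h : P x y ∨ Q x y) : MixedStep P Q x y := by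
  rcases h with h | h
  · exact .inr ⟨x, y, .refl, h, .refl⟩
  · exact .inl h

theorem MixedStep.tail (hP : IsIntervalOrder P) (hQ : IsPartialOrderRel Q)
    (hPQ : ∀ x y : U, ¬ (P x y ∧ Q y x)) {x y z : U}
    (hxy : MixedStep P Q x y) (hyz : P y z ∨ Q y z) : MixedStep P Q x z := by
  rcases hxy with hxy | ⟨a, b, hxa, hab, hby⟩ <;> rcases hyz with hyz | hyz
  · exact .inr ⟨y, z, .single hxy, hyz, .refl⟩
  · exact .inl (hQ.2 _ _ _ hxy hyz)
  · have haz := (hP.two_plus_two_free hab hyz).resolve_right (hP.not_rel_of_reflGen hPQ hby)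
    exact .inr ⟨a, z, hxa, haz, .refl⟩
  · exact .inr ⟨a, b, hxa, hab, hQ.reflGen_trans hby (.single hyz)⟩

theorem MixedStep.of_transGen (hP : IsIntervalOrder P) (hQ : IsPartialOrderRel Q)
    (hPQ : ∀ x y : U, ¬ (P x y ∧ Q y x)) {x y : U}
    (h : TransGen (fun x y => P x y ∨ Q x y) x y) : MixedStep P Q x y := by
  induction h with
  | single h => exact .of_sup h
  | tail _ hstep ih => exact ih.tail hP hQ hPQ hstep

theorem not_transGen_sup_self (hP : IsIntervalOrder P) (hQ : IsPartialOrderRel Q)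
    (hPQ : ∀ x y : U, ¬ (P x y ∧ Q y x)) (x : U) :
    ¬ TransGen (fun x y => P x y ∨ Q x y) x x := by
  intro h
  rcases MixedStep.of_transGen hP hQ hPQ h with hxx | ⟨a, b, hxa, hab, hbx⟩
  · exact hQ.1 x hxx
  · exact hP.not_rel_of_reflGen hPQ (hQ.reflGen_trans hbx hxa) hab

end

theorem isLinearOrderRel_strictPart {U : Type*} {s : U → U → Prop} [IsLinearOrder U s] :
    IsLinearOrderRel (fun x y => s x y ∧ x ≠ y) := by
  refine ⟨⟨fun x h => h.2 rfl, fun x y z hxy hyz => ⟨trans_of s hxy.1 hyz.1, ?_⟩⟩, ?_⟩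
  · rintro rfl
    exact hxy.2 (antisymm hxy.1 hyz.1)
  · intro x y hne
    rcases total_of s x y with h | h
    · exact .inl ⟨h, hne⟩
    · exact .inr ⟨h, hne.symm⟩

theorem exists_isLinearOrderRel_extension {U : Type*} {S : U → U → Prop}
    (hS : ∀ x, ¬ TransGen S x x) :
    ∃ Q0 : U → U → Prop, IsLinearOrderRel Q0 ∧ ∀ x y, S x y → Q0 x y := by
  have : IsPartialOrder U (ReflTransGen S) :=
    { refl := fun _ => .refl
      trans := fun _ _ _ => ReflTransGen.trans
      antisymm := fun x y hxy hyx => by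
        rcases reflTransGen_iff_eq_or_transGen.1 hxy with h | h
        · exact h.symm
        · exact absurd (h.trans_left hyx) (hS x) }
  obtain ⟨s, hs, hle⟩ := extend_partialOrder (ReflTransGen S)
  refine ⟨fun x y => s x y ∧ x ≠ y, isLinearOrderRel_strictPart,
    fun x y h => ⟨hle x y (.single h), ?_⟩⟩
  rintro rfl
  exact hS x (.single h)

theorem statement_4_general {U : Type*} (Q1 Q2 : U → U → Prop)
    (hQ1 : IsIntervalOrder Q1) (hQ2 : IsPartialOrderRel Q2)
    (hnc : ∀ x y : U, ¬ (Q1 x y ∧ Q2 y x)) :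
    ∃ Q0 : U → U → Prop, IsLinearOrderRel Q0 ∧
      (∀ x y, Q1 x y → Q0 x y) ∧ (∀ x y, Q2 x y → Q0 x y) := by
  obtain ⟨Q0, hQ0, hext⟩ := exists_isLinearOrderRel_extension (not_transGen_sup_self hQ1 hQ2 hnc)
  exact ⟨Q0, hQ0, fun x y h => hext x y (.inl h), fun x y h => hext x y (.inr h)⟩

/-- Lemma: an interval order and a partial order that do not contradict
each other have a common linear extension. -/
theorem statement_4 {U : Type*} [Fintype U] (Q1 Q2 : U → U → Prop)
    (hQ1 : IsIntervalOrder Q1) (hQ2 : IsPartialOrderRel Q2)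
    (hnc : ∀ x y : U, ¬ (Q1 x y ∧ Q2 y x)) :
    ∃ Q0 : U → U → Prop, IsLinearOrderRel Q0 ∧
      (∀ x y, Q1 x y → Q0 x y) ∧ (∀ x y, Q2 x y → Q0 x y) :=
  statement_4_general Q1 Q2 hQ1 hQ2 hnc
end

section
/- Let P be a partial order on U = {u_1,…,u_n}, and in the bipartite complement Ĉ(P) of the domination bipartite graph C(P) let E_0 = {u_i v_i : 1 ≤ i ≤ n}. The following statements are equivalent: (a) P = P_1 ∩ P_2 (that is, u <_P u' iff u <_{P_1} u' and u <_{P_2} u') for some linear order P_1 and some interval order P_2 on U; (b) the edge set of Ĉ(P) is the union of the edge sets of N̂C(P_1) and Ĉ(P_2) for two partial orders P_1 and P_2 on U such that N̂C(P_1) and Ĉ(P_2) are chain graphs; (c) Ĉ(P) is linear-interval coverable. -/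
open SimpleGraph

/-!
`Ĉ(Q)` is encoded as `fun i j => ¬ Q i j` and `N̂C(Q)` as `fun i j => ¬ (i = j ∨ Q i j)`.
For a partial order `Q`, the graph `Ĉ(Q)` is a chain graph iff `Q` is an interval order, and
`N̂C(Q)` is a chain graph iff `Q` is linear. As `P₂` is irreflexive, `Ĉ(P) = N̂C(P₁) ∪ Ĉ(P₂)`
says exactly `P = P₁ ∩ P₂`; this gives (a) ⇔ (b) ⇒ (c).

For (c) ⇒ (a), let `Ĉ(P) = E₁ ∪ E₂`. The complement of `E₂` is an interval order `P₂`, and any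
linear extension `L` of `P` that reverses every edge of `E₁` satisfies `L ∩ P₂ = P`. Such an `L`
exists because the rows of `E₁` are nested: the `E₁`-neighbourhood of `x` and its
`P`-predecessors grows weakly along `P` and strictly against `E₁`, so its size, refined by the
number of `P`-predecessors, is a lexicographic key for `L`.
-/

section

variable {U : Type*}

lemma Set.biUnion_ssubset_of_nested {ι α : Type*} {N : ι → Set α}
    (hN : ∀ i j, N i ⊆ N j ∨ N j ⊆ N i) {I : Set ι} {j : ι} {a : α}
    (ha : a ∈ N j) (hI : ∀ i ∈ I, a ∉ N i) : (⋃ i ∈ I, N i) ⊂ N j := by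
  have hsub : (⋃ i ∈ I, N i) ⊆ N j :=
    Set.iUnion₂_subset fun i hi => (hN i j).resolve_right fun h => hI i hi (h ha)
  exact (Set.ssubset_iff_of_subset hsub).2 ⟨a, ha, by simpa using hI⟩

lemma isLinearOrderRel_of_injective {β : Type*} [LinearOrder β] {f : U → β}
    (hf : Function.Injective f) : IsLinearOrderRel fun x y => f x < f y :=
  ⟨⟨fun x => lt_irrefl (f x), fun _ _ _ => lt_trans⟩, fun _ _ hne => lt_or_gt_of_ne (hf.ne hne)⟩

namespace IsLinearOrderRel

variable {P : U → U → Prop}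

lemma swap (h : IsLinearOrderRel P) : IsLinearOrderRel fun x y => P y x :=
  ⟨⟨h.1.1, fun x y z hxy hyz => h.1.2 z y x hyz hxy⟩, fun x y hne => h.2 y x hne.symm⟩

lemma isChainRel (h : IsLinearOrderRel P) : IsChainRel P := by
  obtain ⟨⟨-, htr⟩, htot⟩ := h
  have trich : ∀ a a', a = a' ∨ P a a' ∨ P a' a := fun a a' =>
    (em (a = a')).imp_right (htot a a')
  constructor
  · intro a a'
    rcases trich a a' with rfl | h | h
    · exact Or.inl fun _ => id
    · exact Or.inr fun b hb => htr _ _ _ h hb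
    · exact Or.inl fun b hb => htr _ _ _ h hb
  · intro b b'
    rcases trich b b' with rfl | h | h
    · exact Or.inl fun _ => id
    · exact Or.inl fun a ha => htr _ _ _ ha h
    · exact Or.inr fun a ha => htr _ _ _ ha h

lemma not_eq_or_iff (h : IsLinearOrderRel P) {i j : U} : ¬ (i = j ∨ P i j) ↔ P j i := by
  constructor
  · intro hij
    push Not at hij
    exact (h.2 i j hij.1).resolve_left hij.2
  · rintro hji (rfl | hij)
    exacts [h.1.1 i hji, h.1.1 i (h.1.2 i j i hij hji)]

lemma isChainRel_not_eq_or (h : IsLinearOrderRel P) :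
    IsChainRel fun i j : U => ¬ (i = j ∨ P i j) := by
  have hswap : (fun i j : U => ¬ (i = j ∨ P i j)) = fun i j => P j i :=
    funext₂ fun _ _ => propext h.not_eq_or_iff
  rw [hswap]
  exact h.swap.isChainRel

end IsLinearOrderRel

lemma IsPartialOrderRel.isLinearOrderRel_of_isChainRel_not_eq_or {P : U → U → Prop}
    (hP : IsPartialOrderRel P) (hc : IsChainRel fun i j : U => ¬ (i = j ∨ P i j)) :
    IsLinearOrderRel P := by
  refine ⟨hP, fun a a' hne => ?_⟩
  rcases hc.1 a a' with h | h
  · exact Or.inl <| by_contra fun hn => h a' (fun h' => h'.elim hne hn) (Or.inl rfl)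
  · exact Or.inr <| by_contra fun hn => h a (fun h' => h'.elim (hne ∘ Eq.symm) hn) (Or.inl rfl)

namespace IsIntervalOrder

variable {P : U → U → Prop}

lemma isPartialOrderRel (h : IsIntervalOrder P) : IsPartialOrderRel P := by
  obtain ⟨l, r, hlr, hP⟩ := h
  refine ⟨fun x hx => ?_, fun x y z hxy hyz => ?_⟩
  · exact ((hP x x).1 hx).not_ge (hlr x)
  · rw [hP] at hxy hyz ⊢
    linarith [hlr y]

lemma isChainRel_not (h : IsIntervalOrder P) : IsChainRel fun i j : U => ¬ P i j := by
  obtain ⟨l, r, -, hP⟩ := h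
  simp only [hP, not_lt]
  constructor
  · intro a a'
    rcases le_total (r a) (r a') with hle | hle
    · exact Or.inl fun b hb => hb.trans hle
    · exact Or.inr fun b hb => hb.trans hle
  · intro b b'
    rcases le_total (l b) (l b') with hle | hle
    · exact Or.inr fun a ha => hle.trans ha
    · exact Or.inl fun a ha => hle.trans ha

end IsIntervalOrder

/-- The interval of `x` is `[#↓x, #⋃ {↓y | ¬ x < y}]`, where `↓y` is the set of predecessors
of `y`; the sets `↓y` are nested because the columns of `Ĉ(P)` are. -/
lemma IsPartialOrderRel.isIntervalOrder_of_isChainRel_not [Finite U] {P : U → U → Prop}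
    (hP : IsPartialOrderRel P) (hc : IsChainRel fun i j : U => ¬ P i j) : IsIntervalOrder P := by
  set down : U → Set U := fun y => {a | P a y}
  have hnested : ∀ y y', down y ⊆ down y' ∨ down y' ⊆ down y := fun y y' =>
    (hc.2 y y').symm.imp (fun h a => not_imp_not.1 (h a)) (fun h a => not_imp_not.1 (h a))
  set right : U → Set U := fun x => ⋃ y ∈ {y | ¬ P x y}, down y
  refine ⟨fun x => (down x).ncard, fun x => (right x).ncard, fun x => ?_, fun x y => ?_⟩
  · have hx : x ∈ {y | ¬ P x y} := hP.1 x
    show ((down x).ncard : ℝ) ≤ (right x).ncard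
    exact_mod_cast Set.ncard_le_ncard (Set.subset_biUnion_of_mem (u := down) hx)
  · rw [Nat.cast_lt]
    constructor
    · intro hxy
      exact Set.ncard_lt_ncard
        (Set.biUnion_ssubset_of_nested hnested (show x ∈ down y from hxy) fun _ hy => hy)
    · intro hlt
      by_contra hxy
      exact hlt.not_ge (Set.ncard_le_ncard (Set.subset_biUnion_of_mem (u := down) hxy))

lemma IsChainRel.not_trans_of_refl {E : U → U → Prop} (hE : IsChainRel E) (hrefl : ∀ i, E i i)
    {x y z : U} (hxy : ¬ E x y) (hyz : ¬ E y z) : ¬ E x z := fun hxz =>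
  (hE.1 x y).elim (fun h => hyz (h z hxz)) (fun h => hxy (h y (hrefl y)))

lemma IsChainRel.exists_potential [Finite U] {P E : U → U → Prop} (hP : IsPartialOrderRel P)
    (hE : IsChainRel E) (hirr : ∀ x, ¬ E x x) (hPE : ∀ x y, P x y → ¬ E x y) :
    ∃ φ : U → ℕ, (∀ x y, P x y → φ x ≤ φ y) ∧ ∀ x y, E x y → φ y < φ x := by
  set row : U → Set U := fun a => {b | E a b}
  set nbhd : U → Set U := fun x => ⋃ y ∈ {y | y = x ∨ P y x}, row y
  refine ⟨fun x => (nbhd x).ncard, fun x y hxy => Set.ncard_le_ncard ?_, fun y x hyx => ?_⟩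
  · refine Set.biUnion_subset_biUnion_left fun w hw => Or.inr ?_
    rcases hw with rfl | hwx
    exacts [hxy, hP.2 _ _ _ hwx hxy]
  · have hrow : nbhd x ⊂ row y := by
      refine Set.biUnion_ssubset_of_nested hE.1 (show x ∈ row y from hyx) fun w hw => ?_
      rcases hw with rfl | hwx
      exacts [hirr w, hPE w x hwx]
    exact Set.ncard_lt_ncard
      (hrow.trans_subset (Set.subset_biUnion_of_mem (u := row) (Or.inl rfl)))

lemma IsChainRel.exists_linear_extension_reversing [Finite U] {P E : U → U → Prop}
    (hE : IsChainRel E) (hP : IsPartialOrderRel P) (hirr : ∀ x, ¬ E x x)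
    (hPE : ∀ x y, P x y → ¬ E x y) :
    ∃ L : U → U → Prop, IsLinearOrderRel L ∧ (∀ x y, P x y → L x y) ∧ ∀ x y, E x y → L y x := by
  obtain ⟨φ, hφP, hφE⟩ := hE.exists_potential hP hirr hPE
  obtain ⟨ι, hι⟩ := Countable.exists_injective_nat U
  set ψ : U → ℕ := fun x => {y | P y x}.ncard
  have hψ : ∀ x z, P x z → ψ x < ψ z := fun x z hxz => Set.ncard_lt_ncard <|
    (Set.ssubset_iff_of_subset fun y hyx => hP.2 y x z hyx hxz).2 ⟨x, hxz, hP.1 x⟩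
  set key : U → ℕ ×ₗ (ℕ ×ₗ ℕ) := fun x => toLex (φ x, toLex (ψ x, ι x))
  have hkey : Function.Injective key := fun x y h => by
    simp only [key, toLex_inj, Prod.mk.injEq] at h
    exact hι h.2.2
  refine ⟨fun x y => key x < key y, isLinearOrderRel_of_injective hkey, fun x y hxy => ?_,
    fun x y hxy => Prod.Lex.toLex_lt_toLex.2 (Or.inl (hφE x y hxy))⟩
  rcases (hφP x y hxy).lt_or_eq with hlt | heq
  · exact Prod.Lex.toLex_lt_toLex.2 (Or.inl hlt)
  · exact Prod.Lex.toLex_lt_toLex.2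
      (Or.inr ⟨heq, Prod.Lex.toLex_lt_toLex.2 (Or.inl (hψ x y hxy))⟩)

lemma not_iff_not_eq_or_or_not_iff {P P1 P2 : U → U → Prop} (h2 : ∀ x, ¬ P2 x x) :
    (∀ i j, ¬ P i j ↔ (¬ (i = j ∨ P1 i j) ∨ ¬ P2 i j)) ↔ ∀ i j, P i j ↔ P1 i j ∧ P2 i j := by
  refine forall₂_congr fun i j => ?_
  by_cases hij : i = j
  · subst hij
    simp [h2 i]
  · simp only [hij, false_or, ← not_and_or, not_iff_not]

lemma IsLinearOrderRel.chainCover_of_isIntervalOrder {P P1 P2 : U → U → Prop}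
    (h1 : IsLinearOrderRel P1) (h2 : IsIntervalOrder P2) (hP : ∀ i j, P i j ↔ P1 i j ∧ P2 i j) :
    IsPartialOrderRel P1 ∧ IsPartialOrderRel P2 ∧
      IsChainRel (fun i j : U => ¬ (i = j ∨ P1 i j)) ∧ IsChainRel (fun i j : U => ¬ P2 i j) ∧
      ∀ i j, ¬ P i j ↔ (¬ (i = j ∨ P1 i j) ∨ ¬ P2 i j) :=
  ⟨h1.1, h2.isPartialOrderRel, h1.isChainRel_not_eq_or, h2.isChainRel_not,
    (not_iff_not_eq_or_or_not_iff h2.isPartialOrderRel.1).2 hP⟩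

end

lemma LinearIntervalCoverable.exists_linear_interval {n : ℕ} {P : Fin n → Fin n → Prop}
    (hP : IsPartialOrderRel P) (h : LinearIntervalCoverable n fun i j => ¬ P i j) :
    ∃ P1 P2 : Fin n → Fin n → Prop, IsLinearOrderRel P1 ∧ IsIntervalOrder P2 ∧
      ∀ i j, P i j ↔ P1 i j ∧ P2 i j := by
  obtain ⟨E1, E2, hc1, hc2, hunion, hdiag⟩ := h
  have hP2 : IsPartialOrderRel fun i j => ¬ E2 i j :=
    ⟨fun i hi => hi (hdiag i).1, fun _ _ _ => hc2.not_trans_of_refl fun i => (hdiag i).1⟩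
  have hP2int : IsIntervalOrder fun i j => ¬ E2 i j :=
    hP2.isIntervalOrder_of_isChainRel_not (by simpa only [not_not] using hc2)
  obtain ⟨L, hL, hPL, hE1L⟩ := hc1.exists_linear_extension_reversing hP
    (fun i => (hdiag i).2) fun i j hij hE1 => (hunion i j).2 (Or.inl hE1) hij
  refine ⟨L, _, hL, hP2int, fun i j => ⟨fun hij => ⟨hPL i j hij, ?_⟩, fun ⟨hLij, hE2⟩ => ?_⟩⟩
  · exact fun hE2 => (hunion i j).2 (Or.inr hE2) hij
  · by_contra hij
    rcases (hunion i j).1 hij with hE1 | hE2'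
    exacts [hL.1.1 i (hL.1.2 i j i hLij (hE1L i j hE1)), hE2 hE2']

/-- Theorem: `P = P₁ ∩ P₂` for a linear order `P₁` and an interval order `P₂`
iff `Ĉ(P) = N̂C(P₁) ∪ Ĉ(P₂)` for chain graphs `N̂C(P₁)`, `Ĉ(P₂)` iff `Ĉ(P)` is
linear-interval coverable.  Here `Ĉ(P)` is the bipartite graph `(i,j) ↦ ¬ P i j` and
`N̂C(P₁)` is `(i,j) ↦ ¬ (i = j ∨ P₁ i j)`. -/
theorem statement_5 {n : ℕ} (P : Fin n → Fin n → Prop) (hP : IsPartialOrderRel P) :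
    ((∃ P1 P2 : Fin n → Fin n → Prop, IsLinearOrderRel P1 ∧ IsIntervalOrder P2 ∧
        ∀ i j, P i j ↔ P1 i j ∧ P2 i j) ↔
      (∃ P1 P2 : Fin n → Fin n → Prop, IsPartialOrderRel P1 ∧ IsPartialOrderRel P2 ∧
        IsChainRel (fun i j : Fin n => ¬ (i = j ∨ P1 i j)) ∧
        IsChainRel (fun i j : Fin n => ¬ P2 i j) ∧
        ∀ i j, ¬ P i j ↔ (¬ (i = j ∨ P1 i j) ∨ ¬ P2 i j))) ∧
    ((∃ P1 P2 : Fin n → Fin n → Prop, IsPartialOrderRel P1 ∧ IsPartialOrderRel P2 ∧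
        IsChainRel (fun i j : Fin n => ¬ (i = j ∨ P1 i j)) ∧
        IsChainRel (fun i j : Fin n => ¬ P2 i j) ∧
        ∀ i j, ¬ P i j ↔ (¬ (i = j ∨ P1 i j) ∨ ¬ P2 i j)) ↔
      LinearIntervalCoverable n (fun i j => ¬ P i j)) := by
  refine ⟨⟨fun ⟨P1, P2, h1, h2, hP12⟩ => ⟨P1, P2, h1.chainCover_of_isIntervalOrder h2 hP12⟩, ?_⟩,
    fun ⟨_, _, _, h2, hc1, hc2, hE⟩ =>
      ⟨_, _, hc1, hc2, hE, fun i => ⟨h2.1 i, fun h => h (Or.inl rfl)⟩⟩,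
    fun h => ?_⟩
  · rintro ⟨P1, P2, h1, h2, hc1, hc2, hE⟩
    exact ⟨P1, P2, h1.isLinearOrderRel_of_isChainRel_not_eq_or hc1,
      h2.isIntervalOrder_of_isChainRel_not hc2, (not_iff_not_eq_or_or_not_iff h2.1).1 hE⟩
  · obtain ⟨P1, P2, h1, h2, hP12⟩ := h.exists_linear_interval hP
    exact ⟨P1, P2, h1.chainCover_of_isIntervalOrder h2 hP12⟩
end

section
/- In the Setting, if G̃ = Ĉ(P) is linear-interval coverable, then the conflict graph H* of H is bipartite, i.e., χ(H*) ≤ 2. -/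
open SimpleGraph

/-!
Colour an edge `uv` of `H` (with `u ∈ U`, `v ∈ V`) by whether it lies in the chain graph `E₁`.
Since the non-edges of `H` lie inside `U` or between `U` and `V`, two conflicting edges of `H`
are `U`–`V` edges spanning an induced `2K₂` of `G̃ = E₁ ∪ E₂`. A chain graph has no induced
`2K₂`, so the two edges can neither both lie in `E₁` nor both lie outside it (hence in `E₂`).
-/

theorem IsChainRel.not_induced_2K2 {α β : Type*} {F : α → β → Prop} (hF : IsChainRel F)
    {a a' : α} {b b' : β} (hab : F a b) (hab' : F a' b') (hnab' : ¬ F a b') (hna'b : ¬ F a' b) :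
    False := by
  rcases hF.1 a a' with h | h
  · exact hna'b (h b hab)
  · exact hnab' (h b' hab')

namespace assocSplitGraph

variable {α β : Type*} {E : α → β → Prop}

@[simp]
theorem not_adj_inl_inl (a a' : α) : ¬ (assocSplitGraph E).Adj (.inl a) (.inl a') := id

@[simp]
theorem adj_inl_inr (a : α) (b : β) : (assocSplitGraph E).Adj (.inl a) (.inr b) ↔ E a b :=
  Iff.rfl

@[simp]
theorem adj_inr_inl (a : α) (b : β) : (assocSplitGraph E).Adj (.inr b) (.inl a) ↔ E a b :=
  Iff.rfl

@[simp]
theorem adj_inr_inr (b b' : β) : (assocSplitGraph E).Adj (.inr b) (.inr b') ↔ b ≠ b' :=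
  Iff.rfl

theorem exists_inl_inr_of_sym2Conflict {e f : Sym2 (α ⊕ β)}
    (h : Sym2Conflict (assocSplitGraph E) e f) :
    ∃ a a' b b', e = s(.inl a, .inr b) ∧ f = s(.inl a', .inr b') ∧
      E a b ∧ E a' b' ∧ ¬ E a b' ∧ ¬ E a' b := by
  obtain ⟨a, b, c, d, rfl, rfl, hab, hcd, had, hbc, hac, had', hbc', hbd⟩ := h
  rcases a with a | a <;> rcases b with b | b <;> rcases c with c | c <;> rcases d with d | d <;>
    simp_all

theorem conflictGraphBipartite_of_chain_cover {E₁ E₂ : α → β → Prop} (h₁ : IsChainRel E₁)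
    (h₂ : IsChainRel E₂) (hE : ∀ a b, E a b ↔ E₁ a b ∨ E₂ a b) :
    ConflictGraphBipartite (assocSplitGraph E) := by
  classical
  refine ⟨fun e => decide (∃ a b, e = s(.inl a, .inr b) ∧ E₁ a b), fun e f hef => ?_⟩
  obtain ⟨a, a', b, b', rfl, rfl, hab, hab', hnab', hna'b⟩ := exists_inl_inr_of_sym2Conflict hef
  obtain ⟨h₁ab', h₂ab'⟩ := not_or.mp ((hE a b').not.mp hnab')
  obtain ⟨h₁a'b, h₂a'b⟩ := not_or.mp ((hE a' b).not.mp hna'b)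
  simp only [Sym2.eq_iff, Sum.inl.injEq, Sum.inr.injEq, reduceCtorEq, or_false,
    existsAndEq, and_self, true_and, ne_eq, decide_eq_decide]
  intro hiff
  by_cases h : E₁ a b
  · exact h₁.not_induced_2K2 h (hiff.1 h) h₁ab' h₁a'b
  · exact h₂.not_induced_2K2 (((hE a b).1 hab).resolve_left h)
      (((hE a' b').1 hab').resolve_left (mt hiff.2 h)) h₂ab' h₂a'b

end assocSplitGraph

theorem statement_6_general {n : ℕ} (P : Fin n → Fin n → Prop)
    (hcov : LinearIntervalCoverable n (fun i j => ¬ P i j)) :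
    ConflictGraphBipartite (paperH P) := by
  obtain ⟨E₁, E₂, h₁, h₂, hE, -⟩ := hcov
  exact assocSplitGraph.conflictGraphBipartite_of_chain_cover h₁ h₂ hE

/-- Lemma: if `G̃ = Ĉ(P)` is linear-interval coverable, then the conflict
graph `H*` of the associated split graph `H` of `G̃` is bipartite, i.e. `χ(H*) ≤ 2`. -/
theorem statement_6 {n : ℕ} (P : Fin n → Fin n → Prop) (hP : IsPartialOrderRel P)
    (hcov : LinearIntervalCoverable n (fun i j => ¬ P i j)) :
    ConflictGraphBipartite (paperH P) :=
  statement_6_general P hcov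
end

section
/- Let G=(U,V,E) be a bipartite graph and let H_G be the associated split graph of G. Then ch(G) = t(H_G). -/
open SimpleGraph

/-
A chain graph is exactly a Ferrers relation: after ordering the vertices of `β` by the size of
their neighbourhoods, every neighbourhood of a vertex of `α` is an upper set, so `E a b ↔ x a ≤ y b`
for suitable numbers `x`, `y`. Such a relation becomes a threshold graph on `α ⊕ β` once `β` is made
a clique, by the weights `-1/2 - x a` and `3/2 + y b`; conversely, the threshold weights of any
graph on `α ⊕ β` exhibit its `α`–`β` edges as a Ferrers relation. Hence chain covers `E = ⋃ Eᵢ`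
and threshold covers of `H_E` correspond via `Eᵢ ↦ H_{Eᵢ}`, each `H_{Eᵢ}` containing the clique on
`β`.
-/

section ChainThreshold

variable {α β : Type*} {E : α → β → Prop}

@[simp]
theorem assocSplitGraph_adj_inl_inl (a a' : α) :
    ¬ (assocSplitGraph E).Adj (Sum.inl a) (Sum.inl a') :=
  id

@[simp]
theorem assocSplitGraph_adj_inl_inr (a : α) (b : β) :
    (assocSplitGraph E).Adj (Sum.inl a) (Sum.inr b) ↔ E a b :=
  Iff.rfl

@[simp]
theorem assocSplitGraph_adj_inr_inl (b : β) (a : α) :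
    (assocSplitGraph E).Adj (Sum.inr b) (Sum.inl a) ↔ E a b :=
  Iff.rfl

@[simp]
theorem assocSplitGraph_adj_inr_inr (b b' : β) :
    (assocSplitGraph E).Adj (Sum.inr b) (Sum.inr b') ↔ b ≠ b' :=
  Iff.rfl

theorem isChainRel_of_iff_le {γ : Type*} [LinearOrder γ] (x : α → γ) (y : β → γ)
    (h : ∀ a b, E a b ↔ x a ≤ y b) : IsChainRel E := by
  refine ⟨fun a a' => ?_, fun b b' => ?_⟩
  · refine (le_total (x a) (x a')).symm.imp (fun hle b => ?_) (fun hle b => ?_) <;>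
      simpa only [h] using hle.trans
  · refine (le_total (y b) (y b')).imp (fun hle a => ?_) (fun hle a => ?_) <;>
      simpa only [h] using (·.trans hle)

theorem IsChainRel.exists_nat_iff_le [Fintype α] (hE : IsChainRel E) :
    ∃ (x : α → ℕ) (y : β → ℕ), ∀ a b, E a b ↔ x a ≤ y b := by
  classical
  let N : β → Finset α := fun b => Finset.univ.filter (E · b)
  have hN : ∀ a b, a ∈ N b ↔ E a b := by simp [N]
  -- `x a` is the least number exceeding the degrees of all non-neighbours of `a`.
  let S : α → Set ℕ := fun a => {n | ∀ b, ¬ E a b → (N b).card < n}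
  have hS : ∀ a, (S a).Nonempty := fun a =>
    ⟨Fintype.card α + 1, fun b _ => Nat.lt_succ_of_le (Finset.card_le_univ _)⟩
  refine ⟨fun a => sInf (S a), fun b => (N b).card, fun a b => ⟨fun hab => ?_, fun hle => ?_⟩⟩
  · refine Nat.sInf_le fun b' hab' => Finset.card_lt_card ?_
    have hsub : ∀ c, E c b' → E c b := (hE.2 b' b).resolve_right fun h => hab' (h a hab)
    refine Finset.ssubset_iff_subset_ne.2 ⟨fun c hc => ?_, fun h => ?_⟩
    · simpa only [hN] using hsub c ((hN c b').1 hc)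
    · exact hab' ((hN a b').1 (h ▸ (hN a b).2 hab))
  · by_contra hab
    exact (Nat.sInf_mem (hS a) b hab).not_ge hle

theorem isThresholdGraph_assocSplitGraph_of_iff_le (x : α → ℕ) (y : β → ℕ)
    (h : ∀ a b, E a b ↔ x a ≤ y b) : IsThresholdGraph (assocSplitGraph E) := by
  refine ⟨Sum.elim (fun a => -1 / 2 - x a) (fun b => 3 / 2 + y b), ?_⟩
  rintro (a | b) (a' | b') hne
  · simp only [assocSplitGraph_adj_inl_inl, Sum.elim_inl, false_iff, not_le]
    linarith [(x a).cast_nonneg (α := ℝ), (x a').cast_nonneg (α := ℝ)]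
  · rw [assocSplitGraph_adj_inl_inr, h, ← Nat.cast_le (α := ℝ)]
    simp only [Sum.elim_inl, Sum.elim_inr]
    constructor <;> intro <;> linarith
  · rw [assocSplitGraph_adj_inr_inl, h, ← Nat.cast_le (α := ℝ)]
    simp only [Sum.elim_inl, Sum.elim_inr]
    constructor <;> intro <;> linarith
  · simp only [assocSplitGraph_adj_inr_inr, Sum.elim_inr]
    refine iff_of_true (fun hbb => hne (congrArg Sum.inr hbb)) ?_
    linarith [(y b).cast_nonneg (α := ℝ), (y b').cast_nonneg (α := ℝ)]

theorem IsThresholdGraph.isChainRel_adj_inl_inr {T : SimpleGraph (α ⊕ β)}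
    (hT : IsThresholdGraph T) : IsChainRel fun a b => T.Adj (Sum.inl a) (Sum.inr b) := by
  obtain ⟨w, hw⟩ := hT
  refine isChainRel_of_iff_le (fun a => 1 - w (Sum.inl a)) (fun b => w (Sum.inr b)) fun a b => ?_
  rw [hw _ _ Sum.inl_ne_inr, sub_le_iff_le_add']

theorem IsChainRel.isThresholdGraph_assocSplitGraph [Fintype α] (hE : IsChainRel E) :
    IsThresholdGraph (assocSplitGraph E) :=
  let ⟨x, y, h⟩ := hE.exists_nat_iff_le
  isThresholdGraph_assocSplitGraph_of_iff_le x y h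

theorem hasChainCover_iff_hasThresholdCover [Fintype α] {k : ℕ} (hk : k ≠ 0) :
    HasChainCover E k ↔ HasThresholdCover (assocSplitGraph E) k := by
  constructor
  · rintro ⟨f, hf, hEf⟩
    refine ⟨fun i => assocSplitGraph (f i), fun i => (hf i).isThresholdGraph_assocSplitGraph, ?_⟩
    have : NeZero k := ⟨hk⟩
    rintro (a | b) (a' | b') <;> simp [hEf]
  · rintro ⟨T, hT, hET⟩
    exact ⟨fun i a b => (T i).Adj (Sum.inl a) (Sum.inr b),
      fun i => (hT i).isChainRel_adj_inl_inr, fun a b => hET (Sum.inl a) (Sum.inr b)⟩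

end ChainThreshold

theorem statement_16_general {α β : Type*} [Fintype α] (E : α → β → Prop) :
    chainCoverNumber E = thresholdCoverNumber (assocSplitGraph E) := by
  unfold chainCoverNumber thresholdCoverNumber
  congr 1
  ext k
  exact and_congr_right fun hk => hasChainCover_iff_hasThresholdCover hk.ne'

/-- Lemma: for a bipartite graph `G`, the chain cover number of `G` equals
the threshold cover number of its associated split graph `H_G`. -/
theorem statement_16 {α β : Type*} [Fintype α] [Fintype β] (E : α → β → Prop) :
    chainCoverNumber E = thresholdCoverNumber (assocSplitGraph E) :=
  statement_16_general E
end

section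
/- Let P be a partial order on the finite set U = {u_1,…,u_n}. Then P is an interval order if and only if the domination bipartite graph C(P) is a chain graph. -/
open SimpleGraph

/-! An irreflexive relation whose down-sets `{x | P x y}` are nested is an interval order: nested
down-sets are ordered by their sizes, so `y` may start at the size of its down-set, and `x` may end
at the largest such size among the `y` that are not above `x`. -/

section IntervalOrder

variable {U : Type*} {P : U → U → Prop}

theorem IsIntervalOrder.isChainRel (hP : IsIntervalOrder P) : IsChainRel P := by
  obtain ⟨l, r, -, hlr⟩ := hP
  refine ⟨fun a a' => ?_, fun b b' => ?_⟩
  · rcases le_total (r a') (r a) with h | h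
    · exact .inl fun b hb => (hlr a' b).2 (h.trans_lt ((hlr a b).1 hb))
    · exact .inr fun b hb => (hlr a b).2 (h.trans_lt ((hlr a' b).1 hb))
  · rcases le_total (l b) (l b') with h | h
    · exact .inl fun a ha => (hlr a b').2 (((hlr a b).1 ha).trans_le h)
    · exact .inr fun a ha => (hlr a b).2 (((hlr a b').1 ha).trans_le h)

variable [Fintype U]

open Classical in
noncomputable def predCount (P : U → U → Prop) (y : U) : ℕ :=
  (Finset.univ.filter (P · y)).card

theorem predCount_lt_predCount
    (hnest : ∀ y y', (∀ x, P x y → P x y') ∨ (∀ x, P x y' → P x y))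
    {x y y' : U} (hxy : ¬P x y) (hxy' : P x y') : predCount P y < predCount P y' := by
  classical
  unfold predCount
  refine Finset.card_lt_card ⟨fun z hz => ?_, fun hsub => ?_⟩
  · simp only [Finset.mem_filter, Finset.mem_univ, true_and] at hz ⊢
    exact (hnest y y').resolve_right (fun h => hxy (h x hxy')) z hz
  · exact hxy (by simpa using hsub (by simpa using hxy'))

theorem IsIntervalOrder.of_nested_predecessors (hirr : ∀ x, ¬P x x)
    (hnest : ∀ y y', (∀ x, P x y → P x y') ∨ (∀ x, P x y' → P x y)) : IsIntervalOrder P := by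
  classical
  let r (x : U) : ℕ := (Finset.univ.filter (¬P x ·)).sup (predCount P)
  have le_r {x y : U} (hxy : ¬P x y) : predCount P y ≤ r x :=
    Finset.le_sup (f := predCount P) (by simpa using hxy)
  refine ⟨fun y => (predCount P y : ℝ), fun x => (r x : ℝ), fun x => ?_, fun x y => ?_⟩
  · exact Nat.cast_le.2 (le_r (hirr x))
  simp only [Nat.cast_lt]
  refine ⟨fun hxy => ?_, fun h => by_contra fun hxy => (le_r hxy).not_gt h⟩
  have hpos : 0 < predCount P y :=
    (Nat.zero_le _).trans_lt (predCount_lt_predCount hnest (hirr x) hxy)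
  exact (Finset.sup_lt_iff hpos).2 fun y' hy' =>
    predCount_lt_predCount hnest (by simpa using hy') hxy

end IntervalOrder

/-- Lemma: `P` is an interval order iff the domination bipartite graph
`C(P)` is a chain graph. -/
theorem statement_19 {n : ℕ} (P : Fin n → Fin n → Prop) (hP : IsPartialOrderRel P) :
    IsIntervalOrder P ↔ IsChainRel (fun i j : Fin n => P i j) :=
  ⟨IsIntervalOrder.isChainRel, fun h => .of_nested_predecessors hP.1 h.2⟩
end
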